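/- arXiv:cond-mat/0001117 — 5 statements merged into one kernel-verified Lean document; each statement's English description precedes it below -/
import Mathlib

section
/- Let u ≠ 0 and Δt > 0 be real numbers and σ ∈ ℝ, and set α = e^u·(e^{σ²Δt} − 1)/(e^u − 1)². Then α ≤ 1 if and only if σ² ≤ (1/Δt)·ln(2·cosh u − 1). (This is the upper bound that the trinomial-tree parameter u places on admissible local volatilities.) -/
/-- The trinomial-tree parameter `u` puts an upper bound on admissible local
volatilities: with `α = e^u (e^{σ²Δt} − 1)/(e^u − 1)²`, one has `α ≤ 1` if and
only if `σ² ≤ (1/Δt)·ln(2 cosh u − 1)`. -/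
theorem trinomial_vol_bound (u Δt σ : ℝ) (hu : u ≠ 0) (hΔt : 0 < Δt) :
    Real.exp u * (Real.exp (σ ^ 2 * Δt) - 1) / (Real.exp u - 1) ^ 2 ≤ 1 ↔
      σ ^ 2 ≤ (1 / Δt) * Real.log (2 * Real.cosh u - 1) := by
  have he : (0:ℝ) < Real.exp u := Real.exp_pos u
  have hne : Real.exp u - 1 ≠ 0 := by
    intro h
    have : Real.exp u = Real.exp 0 := by simpa using (by linarith : Real.exp u = 1)
    exact hu (Real.exp_injective this)
  have hd : (0:ℝ) < (Real.exp u - 1) ^ 2 := pow_two_pos_of_ne_zero hne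
  have h1 : Real.exp u * Real.exp (-u) = 1 := by
    rw [← Real.exp_add]; simp
  have hcosh : 2 * Real.cosh u - 1 = Real.exp u + Real.exp (-u) - 1 := by
    rw [Real.cosh_eq]; ring
  have hX : (0:ℝ) < 2 * Real.cosh u - 1 := by
    rw [hcosh]
    nlinarith [Real.exp_pos (-u), sq_nonneg (Real.exp u - 1)]
  have key : Real.exp u * (Real.exp (σ ^ 2 * Δt) - 1) ≤ (Real.exp u - 1) ^ 2 ↔
      Real.exp (σ ^ 2 * Δt) ≤ 2 * Real.cosh u - 1 := by
    rw [hcosh]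
    constructor <;> intro h <;> nlinarith [Real.exp_pos (-u)]
  rw [div_le_one hd, key, ← Real.le_log_iff_exp_le hX]
  rw [show (1 / Δt) * Real.log (2 * Real.cosh u - 1)
      = Real.log (2 * Real.cosh u - 1) / Δt by ring, le_div_iff₀ hΔt]
end

section
/- In the two-step world with exotic payout K_{1,−1} = K ≠ 0 and all other K_{i,j} = 0 (K units of the tractor paying on the path up-then-down), with u ≠ 0 and S₀ > 0: the weights (ω, w₁¹, w₂⁰, w₂¹, w₂²) satisfy the second-order hedge conditions — Λ'(1) = Λ'(0) = Λ'(−1) and ∂Λ'(j)/∂α₁^i = 0 for all i,j ∈ {−1,0,1}, identically in (α₁^{−1}, α₁⁰, α₁¹) ∈ ℝ³ — if and only if ω = 0, w₁¹ = 0, w₂⁰ = 0, w₂¹ = 0 and w₂² = K·e^u; and with these weights Λ'(j) = 0 identically for every j ∈ {−1,0,1}. -/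
open Finset

/-- One-step transition probability in the trinomial tree with parameter `u`:
from a node with local volatility parameter `a`, a `+1` step has probability
`a/(1+e^u)`, a `0` step has probability `1-a`, and a `-1` step has probability
`a/(1+e^{-u})`. -/
noncomputable def oneStepProb (u a : ℝ) (d : ℤ) : ℝ :=
  if d = 1 then a / (1 + Real.exp u)
  else if d = 0 then 1 - a
  else if d = -1 then a / (1 + Real.exp (-u)) else 0

/-- Two-step world: value of the hedged portfolio (short the exotic with payout
coefficients `K i δ`, long `ω` stock, `w11` units of `A₁¹` and `w2i` units of
`A₂ⁱ`) after one step to node `(1,j)`, before re-hedging, as a function of the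
future local volatilities `(α₁⁻¹, α₁⁰, α₁¹) = (am, a0, a1)`. -/
noncomputable def twoStepPortfolio (u S₀ : ℝ) (K : ℤ → ℤ → ℝ)
    (ω w11 w20 w21 w22 : ℝ) (j : ℤ) (am a0 a1 : ℝ) : ℝ :=
  let aj : ℝ := if j = 1 then a1 else if j = 0 then a0 else am
  (-(∑ δ ∈ ({-1, 0, 1} : Finset ℤ), K j δ * oneStepProb u aj δ)
    + ω * S₀ * Real.exp ((j : ℝ) * u)
    + w11 * (if j = 1 then 1 else 0)
    + w20 * oneStepProb u aj (0 - j)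
    + w21 * oneStepProb u aj (1 - j)
    + w22 * oneStepProb u aj (2 - j))

private lemma deriv_affine (b c x : ℝ) : deriv (fun t => b * t + c) x = b := by
  simpa using (((hasDerivAt_id x).const_mul b).add_const c).deriv

private lemma expand_one (u S₀ K ω w11 w20 w21 w22 am a0 a1 : ℝ) :
    twoStepPortfolio u S₀ (fun i δ => if i = 1 ∧ δ = -1 then K else 0)
      ω w11 w20 w21 w22 1 am a0 a1
    = (-(K / (1 + Real.exp (-u))) + w20 / (1 + Real.exp (-u)) - w21
        + w22 / (1 + Real.exp u)) * a1
      + (ω * S₀ * Real.exp u + w11 + w21) := by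
  norm_num [twoStepPortfolio, oneStepProb]
  ring

private lemma expand_zero (u S₀ K ω w11 w20 w21 w22 am a0 a1 : ℝ) :
    twoStepPortfolio u S₀ (fun i δ => if i = 1 ∧ δ = -1 then K else 0)
      ω w11 w20 w21 w22 0 am a0 a1
    = (-w20 + w21 / (1 + Real.exp u)) * a0 + (ω * S₀ + w20) := by
  norm_num [twoStepPortfolio, oneStepProb]
  ring

private lemma expand_neg (u S₀ K ω w11 w20 w21 w22 am a0 a1 : ℝ) :
    twoStepPortfolio u S₀ (fun i δ => if i = 1 ∧ δ = -1 then K else 0)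
      ω w11 w20 w21 w22 (-1) am a0 a1
    = (w20 / (1 + Real.exp u)) * am + (ω * S₀ * Real.exp (-u)) := by
  norm_num [twoStepPortfolio, oneStepProb]
  ring

/-- In the two-step world with exotic payout `K_{1,−1} = K ≠ 0` and all other
coefficients zero, the weights satisfy the second-order hedge conditions —
`Λ'(1) = Λ'(0) = Λ'(−1)` and all first partial derivatives with respect to the
local volatilities vanish, identically in `(α₁⁻¹, α₁⁰, α₁¹) ∈ ℝ³` — if and only
if `ω = 0`, `w₁¹ = 0`, `w₂⁰ = 0`, `w₂¹ = 0`, `w₂² = K e^u`; and with these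
weights the portfolio value is identically zero. -/
theorem twoStep_tractor_hedge (u S₀ K : ℝ) (hu : u ≠ 0) (hS₀ : 0 < S₀)
    (hK : K ≠ 0) (ω w11 w20 w21 w22 : ℝ) :
    letI Kc : ℤ → ℤ → ℝ := fun i δ => if i = 1 ∧ δ = -1 then K else 0
    letI L : ℤ → ℝ → ℝ → ℝ → ℝ := twoStepPortfolio u S₀ Kc ω w11 w20 w21 w22
    (((∀ am a0 a1 : ℝ, L 1 am a0 a1 = L 0 am a0 a1 ∧ L 0 am a0 a1 = L (-1) am a0 a1) ∧
      (∀ j ∈ ({-1, 0, 1} : Set ℤ), ∀ am a0 a1 : ℝ,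
        deriv (fun x => L j x a0 a1) am = 0 ∧
        deriv (fun x => L j am x a1) a0 = 0 ∧
        deriv (fun x => L j am a0 x) a1 = 0)) ↔
      (ω = 0 ∧ w11 = 0 ∧ w20 = 0 ∧ w21 = 0 ∧ w22 = K * Real.exp u)) ∧
    ((ω = 0 ∧ w11 = 0 ∧ w20 = 0 ∧ w21 = 0 ∧ w22 = K * Real.exp u) →
      ∀ j ∈ ({-1, 0, 1} : Set ℤ), ∀ am a0 a1 : ℝ, L j am a0 a1 = 0) := by
  set L : ℤ → ℝ → ℝ → ℝ → ℝ :=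
    twoStepPortfolio u S₀ (fun i δ => if i = 1 ∧ δ = -1 then K else 0) ω w11 w20 w21 w22
    with hLdef
  have hE : (0:ℝ) < Real.exp u := Real.exp_pos u
  have hF : (0:ℝ) < Real.exp (-u) := Real.exp_pos (-u)
  have hEne : (1 + Real.exp u) ≠ 0 := by positivity
  have hFne : (1 + Real.exp (-u)) ≠ 0 := by positivity
  have hEF : Real.exp u * Real.exp (-u) = 1 := by
    rw [← Real.exp_add]; simp
  have hF1 : Real.exp (-u) ≠ 1 := by
    rw [Ne, Real.exp_eq_one_iff, neg_eq_zero]; exact hu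
  -- expansions
  have hL1 : ∀ am a0 a1 : ℝ, L 1 am a0 a1
      = (-(K / (1 + Real.exp (-u))) + w20 / (1 + Real.exp (-u)) - w21
        + w22 / (1 + Real.exp u)) * a1
      + (ω * S₀ * Real.exp u + w11 + w21) :=
    fun am a0 a1 => expand_one u S₀ K ω w11 w20 w21 w22 am a0 a1
  have hL0 : ∀ am a0 a1 : ℝ, L 0 am a0 a1
      = (-w20 + w21 / (1 + Real.exp u)) * a0 + (ω * S₀ + w20) :=
    fun am a0 a1 => expand_zero u S₀ K ω w11 w20 w21 w22 am a0 a1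
  have hLm : ∀ am a0 a1 : ℝ, L (-1) am a0 a1
      = (w20 / (1 + Real.exp u)) * am + (ω * S₀ * Real.exp (-u)) :=
    fun am a0 a1 => expand_neg u S₀ K ω w11 w20 w21 w22 am a0 a1
  constructor
  · constructor
    · rintro ⟨heq, hder⟩
      -- w20 = 0 from derivative at j = -1
      have h1 := (hder (-1) (by simp) 0 0 0).1
      rw [show (fun x => L (-1) x 0 0)
          = fun x => (w20 / (1 + Real.exp u)) * x + (ω * S₀ * Real.exp (-u))
          from funext fun x => hLm x 0 0, deriv_affine] at h1
      have hw20 : w20 = 0 := by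
        rcases div_eq_zero_iff.mp h1 with h | h
        · exact h
        · exact absurd h hEne
      -- w21 = 0 from derivative at j = 0
      have h2 := (hder 0 (by simp) 0 0 0).2.1
      rw [show (fun x => L 0 0 x 0)
          = fun x => (-w20 + w21 / (1 + Real.exp u)) * x + (ω * S₀ + w20)
          from funext fun x => hL0 0 x 0, deriv_affine] at h2
      have hw21 : w21 = 0 := by
        rw [hw20] at h2
        have : w21 / (1 + Real.exp u) = 0 := by linarith
        rcases div_eq_zero_iff.mp this with h | h
        · exact h
        · exact absurd h hEne
      -- w22 from derivative at j = 1
      have h3 := (hder 1 (by simp) 0 0 0).2.2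
      rw [show (fun x => L 1 0 0 x)
          = fun x => (-(K / (1 + Real.exp (-u))) + w20 / (1 + Real.exp (-u)) - w21
              + w22 / (1 + Real.exp u)) * x + (ω * S₀ * Real.exp u + w11 + w21)
          from funext fun x => hL1 0 0 x, deriv_affine] at h3
      rw [hw20, hw21] at h3
      have hw22 : w22 = K * Real.exp u := by
        field_simp at h3
        have h4 : (w22 - K * Real.exp u) * (1 + Real.exp (-u)) = 0 := by
          linear_combination h3 - K * hEF
        rcases mul_eq_zero.mp h4 with h | h
        · linarith
        · exact absurd h hFne
      -- equalities at zero give ω and w11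
      have he := heq 0 0 0
      rw [hL1 0 0 0, hL0 0 0 0, hLm 0 0 0] at he
      simp only [mul_zero, zero_add] at he
      obtain ⟨he1, he2⟩ := he
      rw [hw20, hw21] at he1
      rw [hw20] at he2
      have hω : ω = 0 := by
        have : ω * S₀ * (1 - Real.exp (-u)) = 0 := by linarith
        rcases mul_eq_zero.mp this with h | h
        · rcases mul_eq_zero.mp h with h' | h'
          · exact h'
          · exact absurd h' (ne_of_gt hS₀)
        · exact absurd (by linarith : Real.exp (-u) = 1) hF1
      have hw11 : w11 = 0 := by
        rw [hω] at he1; linarith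
      exact ⟨hω, hw11, hw20, hw21, hw22⟩
    · rintro ⟨hω, hw11, hw20, hw21, hw22⟩
      subst hω hw11 hw20 hw21 hw22
      have hslope : -(K / (1 + Real.exp (-u))) + 0 / (1 + Real.exp (-u)) - 0
          + K * Real.exp u / (1 + Real.exp u) = 0 := by
        field_simp
        linear_combination K * hEF
      constructor
      · intro am a0 a1
        rw [hL1 am a0 a1, hL0 am a0 a1, hLm am a0 a1, hslope]
        norm_num
      · intro j hj am a0 a1
        simp only [Set.mem_insert_iff, Set.mem_singleton_iff] at hj
        rcases hj with rfl | rfl | rfl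
        · refine ⟨?_, ?_, ?_⟩
          · rw [show (fun x => L (-1) x a0 a1)
              = fun x => ((0:ℝ) / (1 + Real.exp u)) * x + (0 * S₀ * Real.exp (-u))
              from funext fun x => hLm x a0 a1, deriv_affine]
            norm_num
          · rw [show (fun x => L (-1) am x a1)
              = fun _ => ((0:ℝ) / (1 + Real.exp u)) * am + (0 * S₀ * Real.exp (-u))
              from funext fun x => hLm am x a1]
            simp
          · rw [show (fun x => L (-1) am a0 x)
              = fun _ => ((0:ℝ) / (1 + Real.exp u)) * am + (0 * S₀ * Real.exp (-u))
              from funext fun x => hLm am a0 x]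
            simp
        · refine ⟨?_, ?_, ?_⟩
          · rw [show (fun x => L 0 x a0 a1)
              = fun _ => (-(0:ℝ) + 0 / (1 + Real.exp u)) * a0 + (0 * S₀ + 0)
              from funext fun x => hL0 x a0 a1]
            simp
          · rw [show (fun x => L 0 am x a1)
              = fun x => (-(0:ℝ) + 0 / (1 + Real.exp u)) * x + (0 * S₀ + 0)
              from funext fun x => hL0 am x a1, deriv_affine]
            norm_num
          · rw [show (fun x => L 0 am a0 x)
              = fun _ => (-(0:ℝ) + 0 / (1 + Real.exp u)) * a0 + (0 * S₀ + 0)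
              from funext fun x => hL0 am a0 x]
            simp
        · refine ⟨?_, ?_, ?_⟩
          · rw [show (fun x => L 1 x a0 a1)
              = fun _ => (-(K / (1 + Real.exp (-u))) + 0 / (1 + Real.exp (-u)) - 0
                + K * Real.exp u / (1 + Real.exp u)) * a1
                + (0 * S₀ * Real.exp u + 0 + 0)
              from funext fun x => hL1 x a0 a1]
            simp
          · rw [show (fun x => L 1 am x a1)
              = fun _ => (-(K / (1 + Real.exp (-u))) + 0 / (1 + Real.exp (-u)) - 0
                + K * Real.exp u / (1 + Real.exp u)) * a1
                + (0 * S₀ * Real.exp u + 0 + 0)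
              from funext fun x => hL1 am x a1]
            simp
          · rw [show (fun x => L 1 am a0 x)
              = fun x => (-(K / (1 + Real.exp (-u))) + 0 / (1 + Real.exp (-u)) - 0
                + K * Real.exp u / (1 + Real.exp u)) * x
                + (0 * S₀ * Real.exp u + 0 + 0)
              from funext fun x => hL1 am a0 x, deriv_affine, hslope]
  · rintro ⟨hω, hw11, hw20, hw21, hw22⟩ j hj am a0 a1
    subst hω hw11 hw20 hw21 hw22
    have hslope : -(K / (1 + Real.exp (-u))) + 0 / (1 + Real.exp (-u)) - 0
        + K * Real.exp u / (1 + Real.exp u) = 0 := by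
      field_simp
      linear_combination K * hEF
    simp only [Set.mem_insert_iff, Set.mem_singleton_iff] at hj
    rcases hj with rfl | rfl | rfl
    · rw [hLm am a0 a1]; norm_num
    · rw [hL0 am a0 a1]; norm_num
    · rw [hL1 am a0 a1, hslope]; norm_num
end

section
/- In the two-step world with u ≠ 0 and S₀ > 0, every exotic option can be perfectly hedged: for every choice of payout coefficients (K_{i,j})_{i,j ∈ {−1,0,1}} there exist real weights (ω, w₁¹, w₂⁰, w₂¹, w₂²) and a constant c ∈ ℝ such that Λ'(j)(α₁^{−1}, α₁⁰, α₁¹) = c for every j ∈ {−1,0,1} and all real values of α₁^{−1}, α₁⁰, α₁¹; i.e., the hedged portfolio value after one step is the same in all three scenarios and is independent of all future local volatilities. -/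
open Finset

set_option maxHeartbeats 1000000 in
/-- In the two-step world every exotic option can be perfectly hedged: for any
payout coefficients `K i δ` there are weights `(ω, w₁¹, w₂⁰, w₂¹, w₂²)` and a
constant `c` such that the portfolio value after one step equals `c` in all
three scenarios `j ∈ {−1,0,1}`, identically in the future local volatilities
`(α₁⁻¹, α₁⁰, α₁¹)`. -/
theorem twoStep_every_exotic_hedgeable (u S₀ : ℝ) (hu : u ≠ 0) (hS₀ : 0 < S₀)
    (K : ℤ → ℤ → ℝ) :
    ∃ ω w11 w20 w21 w22 c : ℝ,
      ∀ j ∈ ({-1, 0, 1} : Set ℤ), ∀ am a0 a1 : ℝ,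
        twoStepPortfolio u S₀ K ω w11 w20 w21 w22 j am a0 a1 = c := by
  have hE : Real.exp u ≠ 0 := (Real.exp_pos u).ne'
  have hP : (1 + Real.exp u) ≠ 0 := by positivity
  have hQ : (1 + Real.exp (-u)) ≠ 0 := by positivity
  have hE1 : Real.exp (-u) - 1 ≠ 0 := by
    intro h
    have h1 : Real.exp (-u) = Real.exp 0 := by rw [Real.exp_zero]; linarith
    exact hu (neg_eq_zero.mp (Real.exp_injective h1))
  have hS : S₀ ≠ 0 := hS₀.ne'
  set P := 1 + Real.exp u with hPdef
  set Q := 1 + Real.exp (-u) with hQdef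
  set B : ℤ → ℝ := fun j => K j 1 / P - K j 0 + K j (-1) / Q with hB
  set w20 := P * B (-1) with hw20
  set w21 := P * (B 0 + w20) with hw21
  set w22 := P * (B 1 + w21 - w20 / Q) with hw22
  set ω := (K (-1) 0 - K 0 0 + w20) / (S₀ * (Real.exp (-u) - 1)) with hω
  set c := -K (-1) 0 + ω * S₀ * Real.exp (-u) with hc
  set w11 := c + K 1 0 - ω * S₀ * Real.exp u - w21 with hw11
  refine ⟨ω, w11, w20, w21, w22, c, ?_⟩
  rintro j (rfl | rfl | rfl) am a0 a1
  · simp only [twoStepPortfolio, oneStepProb]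
    norm_num [Finset.sum_insert, Finset.mem_insert]
    simp only [hc, hω, hw20, hB]
    field_simp
    ring
  · simp only [twoStepPortfolio, oneStepProb]
    norm_num [Finset.sum_insert, Finset.mem_insert]
    simp only [hc, hω, hw21, hw20, hB]
    field_simp
    ring
  · simp only [twoStepPortfolio, oneStepProb]
    norm_num [Finset.sum_insert, Finset.mem_insert]
    simp only [hw11, hc, hω, hw22, hw21, hw20, hB, hPdef, hQdef, Real.exp_neg]
    have hQ' : (1 + (Real.exp u)⁻¹) ≠ 0 := by positivity
    have hE1' : (Real.exp u)⁻¹ - 1 ≠ 0 := by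
      simpa [Real.exp_neg] using hE1
    field_simp
    ring
end

section
/- In the three-step world (u ≠ 0, S₀ > 0, K ∈ ℝ), if the hedge weights satisfy, identically in the eight local-volatility variables, the conditions ∂Λ'(0)/∂α₂^j = 0 for j ∈ {−1,0,1}, ∂Λ'(1)/∂α₂^{−2} = ∂Λ'(−1)/∂α₂^{−2}, and ∂Λ'(1)/∂α₂^{2} = ∂Λ'(−1)/∂α₂^{2}, then necessarily w₃^{−1} = 0, w₃⁰ = 0, w₃¹ = −(1+e^u)K, w₃² = −(1+e^u)²K, and w₃³ = −(1+e^u)(1+e^u+e^{2u})K. -/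
/-- Three-step world, short `K` units of the tractor paying 1 only on the path
`(0,0,0)`: value of the hedged portfolio after one step to node `(1,j)`, before
re-hedging, as an explicit polynomial in the eight future local volatility
parameters `α₁⁻¹, α₁⁰, α₁¹, α₂⁻², α₂⁻¹, α₂⁰, α₂¹, α₂²`
(`= a1m1, a10, a11, a2m2, a2m1, a20, a21, a22`). The hedge consists of `ω`
stock, `w11` units of `A₁¹`, `w2i` units of `A₂ⁱ` and `w3i` units of `A₃ⁱ`. -/
noncomputable def threeStepPortfolio (u S₀ K ω w11 w20 w21 w22 w3m1 w30 w31 w32 w33 : ℝ)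
    (j : ℤ) (a1m1 a10 a11 a2m2 a2m1 a20 a21 a22 : ℝ) : ℝ :=
  let cu : ℝ := 1 + Real.exp u
  let cd : ℝ := 1 + Real.exp (-u)
  if j = 1 then
    (w11 + a11 / cd * w20 + (1 - a11) * w21 + a11 / cu * w22
      + a11 * a20 / cd ^ 2 * w3m1
      + (a11 * (1 - a20) + (1 - a11) * a21) / cd * w30
      + (a11 * (a22 + a20) / (cu * cd) + (1 - a11) * (1 - a21)) * w31
      + (a11 * (1 - a22) + (1 - a11) * a21) / cu * w32
      + a11 * a22 / cu ^ 2 * w33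
      + Real.exp u * ω * S₀)
  else if j = 0 then
    ((1 - a10) * w20 + a10 / cu * w21
      + (a10 * (1 - a2m1) + (1 - a10) * a20) / cd * w3m1
      + (a10 * (a21 + a2m1) / (cu * cd) + (1 - a10) * (1 - a20)) * w30
      + (a10 * (1 - a21) + (1 - a10) * a20) / cu * w31
      + a10 * a21 / cu ^ 2 * w32
      + ω * S₀ - K * (1 - a10) * (1 - a20))
  else
    (a1m1 / cu * w20
      + (a1m1 * (a20 + a2m2) / (cu * cd) + (1 - a1m1) * (1 - a2m1)) * w3m1
      + (a1m1 * (1 - a20) + (1 - a1m1) * a2m1) / cu * w30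
      + a1m1 * a20 / cu ^ 2 * w31
      + Real.exp (-u) * ω * S₀)

/-! Each `Λ'(j)` is affine in every single `α₂ⁱ`, so every derivative condition is a linear
equation in the `w₃ⁱ` whose coefficients are polynomials in the remaining local volatilities.
Setting the `α₁ʲ` to `0` or `1` leaves a triangular system, solved successively for
`w₃⁻¹, w₃⁰, w₃¹, w₃², w₃³`; the last value uses `(1 + e^u) / (1 + e^{-u}) = e^u`. -/

open Real

lemma deriv_eq_of_affine {f : ℝ → ℝ} {a : ℝ} (hf : ∀ x, f x = a * x + f 0) (p : ℝ) :
    deriv f p = a := by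
  have hderiv : HasDerivAt (fun x => a * x + f 0) a p := by
    simpa using ((hasDerivAt_id p).const_mul a).add_const (f 0)
  rw [funext hf, hderiv.deriv]

section Partials

variable (u S₀ K ω w11 w20 w21 w22 w3m1 w30 w31 w32 w33 : ℝ)
  (a1m1 a10 a11 a2m2 a2m1 a20 a21 a22 p : ℝ)

local notation "Λ" => threeStepPortfolio u S₀ K ω w11 w20 w21 w22 w3m1 w30 w31 w32 w33
local notation "cu" => 1 + exp u
local notation "cd" => 1 + exp (-u)

lemma threeStepPortfolio_zero_deriv_a2m1 :
    deriv (fun x => Λ 0 a1m1 a10 a11 a2m2 x a20 a21 a22) p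
      = a10 * (w30 / (cu * cd) - w3m1 / cd) :=
  deriv_eq_of_affine (fun x => by simp only [threeStepPortfolio]; norm_num; ring) p

lemma threeStepPortfolio_zero_deriv_a20 :
    deriv (fun x => Λ 0 a1m1 a10 a11 a2m2 a2m1 x a21 a22) p
      = (1 - a10) * (w3m1 / cd - w30 + w31 / cu + K) :=
  deriv_eq_of_affine (fun x => by simp only [threeStepPortfolio]; norm_num; ring) p

lemma threeStepPortfolio_zero_deriv_a21 :
    deriv (fun x => Λ 0 a1m1 a10 a11 a2m2 a2m1 a20 x a22) p
      = a10 * (w30 / (cu * cd) - w31 / cu + w32 / cu ^ 2) :=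
  deriv_eq_of_affine (fun x => by simp only [threeStepPortfolio]; norm_num; ring) p

lemma threeStepPortfolio_one_deriv_a2m2 :
    deriv (fun x => Λ 1 a1m1 a10 a11 x a2m1 a20 a21 a22) p = 0 :=
  deriv_eq_of_affine (fun x => by simp only [threeStepPortfolio]; norm_num) p

lemma threeStepPortfolio_neg_one_deriv_a2m2 :
    deriv (fun x => Λ (-1) a1m1 a10 a11 x a2m1 a20 a21 a22) p = a1m1 * w3m1 / (cu * cd) :=
  deriv_eq_of_affine (fun x => by simp only [threeStepPortfolio]; norm_num; ring) p

lemma threeStepPortfolio_one_deriv_a22 :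
    deriv (fun x => Λ 1 a1m1 a10 a11 a2m2 a2m1 a20 a21 x) p
      = a11 * (w31 / (cu * cd) - w32 / cu + w33 / cu ^ 2) :=
  deriv_eq_of_affine (fun x => by simp only [threeStepPortfolio]; norm_num; ring) p

lemma threeStepPortfolio_neg_one_deriv_a22 :
    deriv (fun x => Λ (-1) a1m1 a10 a11 a2m2 a2m1 a20 a21 x) p = 0 :=
  deriv_eq_of_affine (fun x => by simp only [threeStepPortfolio]; norm_num) p

end Partials

lemma w3_weights_of_slope_equations {c d K w3m1 w30 w31 w32 w33 : ℝ} (hc : c ≠ 0) (hd : d ≠ 0)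
    (h1 : 0 = w3m1 / (c * d)) (h2 : w30 / (c * d) - w3m1 / d = 0)
    (h3 : w3m1 / d - w30 + w31 / c + K = 0) (h4 : w30 / (c * d) - w31 / c + w32 / c ^ 2 = 0)
    (h5 : w31 / (c * d) - w32 / c + w33 / c ^ 2 = 0) :
    w3m1 = 0 ∧ w30 = 0 ∧ w31 = -c * K ∧ w32 = -c ^ 2 * K ∧
      w33 = -c ^ 3 * K + c ^ 2 * K / d := by
  obtain rfl : w3m1 = 0 := by simpa [hc, hd, eq_comm] using h1
  obtain rfl : w30 = 0 := by simpa [hc, hd] using h2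
  obtain rfl : w31 = -c * K := by
    rw [zero_div, sub_zero, zero_add] at h3
    field_simp at h3
    linear_combination h3
  obtain rfl : w32 = -c ^ 2 * K := by
    rw [zero_div, zero_sub] at h4
    field_simp at h4
    linear_combination h4
  refine ⟨rfl, rfl, rfl, rfl, ?_⟩
  field_simp at h5 ⊢
  linear_combination h5

theorem threeStep_forced_w3_weights_general (u S₀ K : ℝ)
    (ω w11 w20 w21 w22 w3m1 w30 w31 w32 w33 : ℝ)
    (L : ℤ → ℝ → ℝ → ℝ → ℝ → ℝ → ℝ → ℝ → ℝ → ℝ)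
    (hL : L = threeStepPortfolio u S₀ K ω w11 w20 w21 w22 w3m1 w30 w31 w32 w33)
    (h0m1 : ∀ a1m1 a10 a11 a2m2 a2m1 a20 a21 a22 : ℝ,
      deriv (fun x => L 0 a1m1 a10 a11 a2m2 x a20 a21 a22) a2m1 = 0)
    (h00 : ∀ a1m1 a10 a11 a2m2 a2m1 a20 a21 a22 : ℝ,
      deriv (fun x => L 0 a1m1 a10 a11 a2m2 a2m1 x a21 a22) a20 = 0)
    (h01 : ∀ a1m1 a10 a11 a2m2 a2m1 a20 a21 a22 : ℝ,
      deriv (fun x => L 0 a1m1 a10 a11 a2m2 a2m1 a20 x a22) a21 = 0)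
    (hm2 : ∀ a1m1 a10 a11 a2m2 a2m1 a20 a21 a22 : ℝ,
      deriv (fun x => L 1 a1m1 a10 a11 x a2m1 a20 a21 a22) a2m2 =
      deriv (fun x => L (-1) a1m1 a10 a11 x a2m1 a20 a21 a22) a2m2)
    (hp2 : ∀ a1m1 a10 a11 a2m2 a2m1 a20 a21 a22 : ℝ,
      deriv (fun x => L 1 a1m1 a10 a11 a2m2 a2m1 a20 a21 x) a22 =
      deriv (fun x => L (-1) a1m1 a10 a11 a2m2 a2m1 a20 a21 x) a22) :
    w3m1 = 0 ∧ w30 = 0 ∧ w31 = -(1 + Real.exp u) * K ∧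
      w32 = -(1 + Real.exp u) ^ 2 * K ∧
      w33 = -(1 + Real.exp u) * (1 + Real.exp u + Real.exp (2 * u)) * K := by
  subst hL
  have hm2' := hm2 1 0 0 0 0 0 0 0
  have h0m1' := h0m1 0 1 0 0 0 0 0 0
  have h00' := h00 0 0 0 0 0 0 0 0
  have h01' := h01 0 1 0 0 0 0 0 0
  have hp2' := hp2 0 0 1 0 0 0 0 0
  simp only [threeStepPortfolio_one_deriv_a2m2, threeStepPortfolio_neg_one_deriv_a2m2,
    threeStepPortfolio_zero_deriv_a2m1, threeStepPortfolio_zero_deriv_a20,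
    threeStepPortfolio_zero_deriv_a21, threeStepPortfolio_one_deriv_a22,
    threeStepPortfolio_neg_one_deriv_a22, one_mul, sub_zero] at hm2' h0m1' h00' h01' hp2'
  obtain ⟨hw3m1, hw30, hw31, hw32, hw33⟩ :=
    w3_weights_of_slope_equations (by positivity) (by positivity) hm2' h0m1' h00' h01' hp2'
  refine ⟨hw3m1, hw30, hw31, hw32, ?_⟩
  rw [hw33, exp_neg, two_mul, exp_add]
  field_simp
  ring

/-- In the three-step world, if the hedge weights satisfy, identically in the
eight local-volatility variables, `∂Λ'(0)/∂α₂ʲ = 0` for `j ∈ {−1,0,1}`,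
`∂Λ'(1)/∂α₂⁻² = ∂Λ'(−1)/∂α₂⁻²` and `∂Λ'(1)/∂α₂² = ∂Λ'(−1)/∂α₂²`, then
necessarily `w₃⁻¹ = 0`, `w₃⁰ = 0`, `w₃¹ = −(1+e^u)K`, `w₃² = −(1+e^u)²K`,
and `w₃³ = −(1+e^u)(1+e^u+e^{2u})K`. -/
theorem threeStep_forced_w3_weights (u S₀ K : ℝ) (hu : u ≠ 0) (hS₀ : 0 < S₀)
    (ω w11 w20 w21 w22 w3m1 w30 w31 w32 w33 : ℝ)
    (L : ℤ → ℝ → ℝ → ℝ → ℝ → ℝ → ℝ → ℝ → ℝ → ℝ)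
    (hL : L = threeStepPortfolio u S₀ K ω w11 w20 w21 w22 w3m1 w30 w31 w32 w33)
    (h0m1 : ∀ a1m1 a10 a11 a2m2 a2m1 a20 a21 a22 : ℝ,
      deriv (fun x => L 0 a1m1 a10 a11 a2m2 x a20 a21 a22) a2m1 = 0)
    (h00 : ∀ a1m1 a10 a11 a2m2 a2m1 a20 a21 a22 : ℝ,
      deriv (fun x => L 0 a1m1 a10 a11 a2m2 a2m1 x a21 a22) a20 = 0)
    (h01 : ∀ a1m1 a10 a11 a2m2 a2m1 a20 a21 a22 : ℝ,
      deriv (fun x => L 0 a1m1 a10 a11 a2m2 a2m1 a20 x a22) a21 = 0)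
    (hm2 : ∀ a1m1 a10 a11 a2m2 a2m1 a20 a21 a22 : ℝ,
      deriv (fun x => L 1 a1m1 a10 a11 x a2m1 a20 a21 a22) a2m2 =
      deriv (fun x => L (-1) a1m1 a10 a11 x a2m1 a20 a21 a22) a2m2)
    (hp2 : ∀ a1m1 a10 a11 a2m2 a2m1 a20 a21 a22 : ℝ,
      deriv (fun x => L 1 a1m1 a10 a11 a2m2 a2m1 a20 a21 x) a22 =
      deriv (fun x => L (-1) a1m1 a10 a11 a2m2 a2m1 a20 a21 x) a22) :
    w3m1 = 0 ∧ w30 = 0 ∧ w31 = -(1 + Real.exp u) * K ∧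
      w32 = -(1 + Real.exp u) ^ 2 * K ∧
      w33 = -(1 + Real.exp u) * (1 + Real.exp u + Real.exp (2 * u)) * K :=
  threeStep_forced_w3_weights_general u S₀ K ω w11 w20 w21 w22 w3m1 w30 w31 w32 w33 L hL h0m1 h00
    h01 hm2 hp2
end

section
/- In the three-step world, if w₃^{−1} = 0, w₃⁰ = 0 and w₃¹ = −(1+e^u)K, then for all values of the eight local-volatility variables, ∂Λ'(1)/∂α₂⁰ − ∂Λ'(−1)/∂α₂⁰ = K·(α₁^{−1} − e^u·α₁¹)/(1+e^u), regardless of the values of all other hedge weights; in particular this difference is not identically zero whenever K ≠ 0. -/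
/-- In the three-step world, if `w₃⁻¹ = 0`, `w₃⁰ = 0` and `w₃¹ = −(1+e^u)K`,
then — for all values of the eight local-volatility variables and regardless of
the remaining hedge weights — `∂Λ'(1)/∂α₂⁰ − ∂Λ'(−1)/∂α₂⁰
= K(α₁⁻¹ − e^u α₁¹)/(1+e^u)`; in particular this difference is not identically
zero when `K ≠ 0`. -/
theorem threeStep_unhedgeable_second_order_term (u S₀ K : ℝ) (hu : u ≠ 0)
    (hS₀ : 0 < S₀) (ω w11 w20 w21 w22 w32 w33 : ℝ)
    (L : ℤ → ℝ → ℝ → ℝ → ℝ → ℝ → ℝ → ℝ → ℝ → ℝ)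
    (hL : L = threeStepPortfolio u S₀ K ω w11 w20 w21 w22 0 0
      (-(1 + Real.exp u) * K) w32 w33) :
    (∀ a1m1 a10 a11 a2m2 a2m1 a20 a21 a22 : ℝ,
      deriv (fun x => L 1 a1m1 a10 a11 a2m2 a2m1 x a21 a22) a20 -
        deriv (fun x => L (-1) a1m1 a10 a11 a2m2 a2m1 x a21 a22) a20 =
      K * (a1m1 - Real.exp u * a11) / (1 + Real.exp u)) ∧
    (K ≠ 0 → ∃ a1m1 a10 a11 a2m2 a2m1 a20 a21 a22 : ℝ,
      deriv (fun x => L 1 a1m1 a10 a11 a2m2 a2m1 x a21 a22) a20 -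
        deriv (fun x => L (-1) a1m1 a10 a11 a2m2 a2m1 x a21 a22) a20 ≠ 0) := by

  have hcu : (1 + Real.exp u) ≠ 0 := by positivity
  have hcd : (1 + Real.exp (-u)) ≠ 0 := by positivity
  have key : ∀ (c d y : ℝ), deriv (fun x => c * x + d) y = c := by
    intro c d y
    simpa using (((hasDerivAt_id y).const_mul c).add_const d).deriv
  have main : ∀ a1m1 a10 a11 a2m2 a2m1 a20 a21 a22 : ℝ,
      deriv (fun x => L 1 a1m1 a10 a11 a2m2 a2m1 x a21 a22) a20 -
        deriv (fun x => L (-1) a1m1 a10 a11 a2m2 a2m1 x a21 a22) a20 =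
      K * (a1m1 - Real.exp u * a11) / (1 + Real.exp u) := by
    intro a1m1 a10 a11 a2m2 a2m1 a20 a21 a22
    have h1 : (fun x => L 1 a1m1 a10 a11 a2m2 a2m1 x a21 a22)
        = fun x => (-(a11 * K / (1 + Real.exp (-u)))) * x
            + L 1 a1m1 a10 a11 a2m2 a2m1 0 a21 a22 := by
      subst hL
      funext x
      simp only [threeStepPortfolio, if_pos rfl, ↓reduceIte]
      field_simp
      ring
    have h2 : (fun x => L (-1) a1m1 a10 a11 a2m2 a2m1 x a21 a22)
        = fun x => (-(a1m1 * K / (1 + Real.exp u))) * x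
            + L (-1) a1m1 a10 a11 a2m2 a2m1 0 a21 a22 := by
      subst hL
      funext x
      simp only [threeStepPortfolio]
      norm_num
      field_simp
      ring
    rw [h1, h2, key, key]
    have hE : Real.exp u * Real.exp (-u) = 1 := by
      rw [← Real.exp_add]; simp
    field_simp
    linear_combination (K * a11) * hE
  refine ⟨main, fun hK => ⟨1, 0, 0, 0, 0, 0, 0, 0, ?_⟩⟩
  rw [main 1 0 0 0 0 0 0 0]
  simp only [mul_zero, sub_zero, mul_one]
  exact div_ne_zero hK hcu
end
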